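/- The vector fields X = λ∂₁ − u₁∂₂ and Y = ∂₃ + (λ − u₂)∂₂ commute for all λ ≠ 0 if and only if u satisfies u₁₃ + u₁u₂₂ − u₂u₁₂ = 0. -/

import Mathlib

/-- Partial derivative in the `i`-th coordinate direction. -/
noncomputable def pd (i : Fin 3) (f : (Fin 3 → ℝ) → ℝ) (x : Fin 3 → ℝ) : ℝ :=
  fderiv ℝ f x (Pi.single i 1)

/-- Lie bracket of vector fields on `ℝ³`, given by their coefficient functions. -/
noncomputable def lieBracket (X Y : (Fin 3 → ℝ) → Fin 3 → ℝ)
    (x : Fin 3 → ℝ) (i : Fin 3) : ℝ :=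
  ∑ j : Fin 3, (X x j * pd j (fun y => Y y i) x - Y x j * pd j (fun y => X y i) x)

/-! The component `[X, Y]¹` is `u₁₃ + u₁u₂₂ − u₂u₁₂`, independently of `λ`, while the other two
components vanish because the corresponding coefficients of `X` and `Y` are constant. -/

section PartialDerivatives

variable (i : Fin 3) (f : (Fin 3 → ℝ) → ℝ) (x : Fin 3 → ℝ)

@[simp]
lemma pd_const (c : ℝ) : pd i (fun _ => c) x = 0 := by
  simp [pd]

@[simp]
lemma pd_neg : pd i (fun y => -f y) x = -pd i f x := by
  simp only [pd, fderiv_fun_neg]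
  rfl

@[simp]
lemma pd_const_sub (c : ℝ) : pd i (fun y => c - f y) x = -pd i f x := by
  simp only [pd, fderiv_const_sub]
  rfl

lemma pd_pd_eq_fderiv_fderiv {j : Fin 3} (hf : DifferentiableAt ℝ (fderiv ℝ f) x) :
    pd i (pd j f) x = fderiv ℝ (fderiv ℝ f) x (Pi.single i 1) (Pi.single j 1) := by
  unfold pd
  rw [fderiv_clm_apply hf (differentiableAt_const _)]
  simp

end PartialDerivatives

lemma pd_pd_comm {f : (Fin 3 → ℝ) → ℝ} (hf : ContDiff ℝ 2 f) (i j : Fin 3) (x : Fin 3 → ℝ) :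
    pd i (pd j f) x = pd j (pd i f) x := by
  have hf' : Differentiable ℝ (fderiv ℝ f) :=
    (hf.fderiv_right (m := 1) le_rfl).differentiable one_ne_zero
  rw [pd_pd_eq_fderiv_fderiv i f x (hf' x), pd_pd_eq_fderiv_fderiv j f x (hf' x),
    (hf.contDiffAt.isSymmSndFDerivAt (by simp)).eq]

lemma lieBracket_eq_zero_of_const {X Y : (Fin 3 → ℝ) → Fin 3 → ℝ} {i : Fin 3} {a b : ℝ}
    (hX : ∀ x, X x i = a) (hY : ∀ x, Y x i = b) (x : Fin 3 → ℝ) :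
    lieBracket X Y x i = 0 := by
  simp [lieBracket, hX, hY]

lemma lieBracket_laxPair_one {u : (Fin 3 → ℝ) → ℝ} (hu : ContDiff ℝ 2 u) (l : ℝ)
    (x : Fin 3 → ℝ) :
    lieBracket (fun x => ![l, -(pd 0 u x), 0]) (fun x => ![0, l - pd 1 u x, 1]) x 1
      = pd 0 (pd 2 u) x + pd 0 u x * pd 1 (pd 1 u) x - pd 1 u x * pd 0 (pd 1 u) x := by
  simp only [lieBracket, Fin.sum_univ_three, Matrix.cons_val_zero, Matrix.cons_val_one,
    Matrix.cons_val_two, Matrix.head_cons, Matrix.tail_cons, pd_neg, pd_const_sub]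
  rw [pd_pd_comm hu 1 0, pd_pd_comm hu 2 0]
  ring

/-- The vector fields `X = λ∂₁ − u₁∂₂` and `Y = ∂₃ + (λ − u₂)∂₂` commute for all
`λ ≠ 0` iff `u` satisfies `u₁₃ + u₁u₂₂ − u₂u₁₂ = 0`. -/
theorem lax_pair_33
    (u : (Fin 3 → ℝ) → ℝ) (hu : ContDiff ℝ 2 u) :
    (∀ l : ℝ, l ≠ 0 → ∀ x, ∀ i : Fin 3,
      lieBracket
        (fun x => ![l, -(pd 0 u x), 0])
        (fun x => ![0, l - pd 1 u x, 1])
        x i = 0) ↔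
    (∀ x, pd 0 (pd 2 u) x + pd 0 u x * pd 1 (pd 1 u) x
        - pd 1 u x * pd 0 (pd 1 u) x = 0) := by
  constructor
  · intro hcomm x
    rw [← lieBracket_laxPair_one hu 1 x]
    exact hcomm 1 one_ne_zero x 1
  · intro hpde l _ x i
    fin_cases i
    · exact lieBracket_eq_zero_of_const (fun _ => rfl) (fun _ => rfl) x
    · exact (lieBracket_laxPair_one hu l x).trans (hpde x)
    · exact lieBracket_eq_zero_of_const (fun _ => rfl) (fun _ => rfl) x
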